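/- arXiv:1407.6293 — 2 statements merged into one kernel-verified Lean document; each statement's English description precedes it below -/
import Mathlib

section
/- Let q1,q2,q3 be real numbers with ∑ qi = 1, ∑ qi^2 = 1 - A^2 and 0 ≤ A^2 ≤ 2/3. If at least two of the qi are nonzero or A > 0 (i.e., unless (q1,q2,q3) is a permutation of (1,0,0) and A = 0), then ∑ qi^4 + ∑_{1≤i<j≤3} qi^2 qj^2 + ∑ qi^2 - 2 ∑ qi^3 > 0. -/
/-- Away from the flat Taub case, the rescaled Kretschmann scalar of a Kasner
    solution is strictly positive. -/
theorem kretschmann_positive_nondegenerate (q1 q2 q3 A : ℝ)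
    (hsum : q1 + q2 + q3 = 1)
    (hsq : q1 ^ 2 + q2 ^ 2 + q3 ^ 2 = 1 - A ^ 2)
    (hA0 : 0 ≤ A ^ 2) (hA : A ^ 2 ≤ 2 / 3)
    (hnondeg : (q1 ≠ 0 ∧ q2 ≠ 0) ∨ (q1 ≠ 0 ∧ q3 ≠ 0) ∨ (q2 ≠ 0 ∧ q3 ≠ 0) ∨ 0 < A) :
    0 < (q1 ^ 4 + q2 ^ 4 + q3 ^ 4) +
          (q1 ^ 2 * q2 ^ 2 + q1 ^ 2 * q3 ^ 2 + q2 ^ 2 * q3 ^ 2) +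
          (q1 ^ 2 + q2 ^ 2 + q3 ^ 2) -
          2 * (q1 ^ 3 + q2 ^ 3 + q3 ^ 3) := by
  rcases hnondeg with ⟨h1, h2⟩ | ⟨h1, h2⟩ | ⟨h1, h2⟩ | hApos
  · have hp : 0 < (q1 * q2) ^ 2 := by positivity
    nlinarith [sq_nonneg (q1 * (q1 - 1)), sq_nonneg (q2 * (q2 - 1)),
      sq_nonneg (q3 * (q3 - 1)), sq_nonneg (q1 * q3), sq_nonneg (q2 * q3)]
  · have hp : 0 < (q1 * q3) ^ 2 := by positivity
    nlinarith [sq_nonneg (q1 * (q1 - 1)), sq_nonneg (q2 * (q2 - 1)),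
      sq_nonneg (q3 * (q3 - 1)), sq_nonneg (q1 * q2), sq_nonneg (q2 * q3)]
  · have hp : 0 < (q2 * q3) ^ 2 := by positivity
    nlinarith [sq_nonneg (q1 * (q1 - 1)), sq_nonneg (q2 * (q2 - 1)),
      sq_nonneg (q3 * (q3 - 1)), sq_nonneg (q1 * q2), sq_nonneg (q1 * q3)]
  · have hpq : q1 * q2 + q1 * q3 + q2 * q3 = A ^ 2 / 2 := by nlinarith
    nlinarith [sq_nonneg (q1 * (q1 - 1)), sq_nonneg (q2 * (q2 - 1)),
      sq_nonneg (q3 * (q3 - 1)), sq_nonneg (q1 * q2 - q1 * q3),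
      sq_nonneg (q1 * q2 - q2 * q3), sq_nonneg (q1 * q3 - q2 * q3),
      mul_pos hApos hApos, sq_nonneg A, mul_pos (mul_pos hApos hApos) (mul_pos hApos hApos)]
end

section
/- Let σ > 0, c ≥ 0 with cσ < 2/3, and let y : (0,1] → ℝ≥0 be continuous and satisfy y(t) ≤ D + B t^{-cσ} + cσ' ∫_t^1 s^{-1} y(s) ds for all t ∈ (0,1], where D, B ≥ 0 and σ' = σ. Then y(t) ≤ (D + B t^{-cσ})·t^{-cσ} for all t ∈ (0,1]; in particular y(t) ≤ (D + B)·t^{-2cσ}. -/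
/-! On `[t, 1]` the source `B s ^ (-a)` is at most `B t ^ (-a)`, so it suffices to treat a constant
source `E`. For `u s = ∫ r in s..1, r⁻¹ * y r` the inequality `y ≤ E + a u` reads `-s u' ≤ E + a u`,
which says that `s ↦ s ^ a * (E + a u s)` is nondecreasing; comparing its values at `t` and `1`
gives `y t ≤ E + a u t ≤ E t ^ (-a)`. -/

open MeasureTheory intervalIntegral Set

lemma hasDerivAt_integral_left_of_continuousOn {g : ℝ → ℝ} {t b x : ℝ}
    (hg : ContinuousOn g (Icc t b)) (hx : x ∈ Ioo t b) :
    HasDerivAt (fun s => ∫ r in s..b, g r) (-g x) x := by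
  have hxb : uIcc x b ⊆ Icc t b := by
    rw [uIcc_of_le hx.2.le]; exact Icc_subset_Icc hx.1.le le_rfl
  exact integral_hasDerivAt_left ((hg.mono hxb).intervalIntegrable)
    ((hg.mono Ioo_subset_Icc_self).stronglyMeasurableAtFilter isOpen_Ioo x hx)
    (hg.continuousAt (Icc_mem_nhds hx.1 hx.2))

section Gronwall

variable {y : ℝ → ℝ} {a E t b : ℝ}

lemma monotoneOn_rpow_mul_add_integral_inv_mul (ha : 0 ≤ a) (ht : 0 < t)
    (hyc : ContinuousOn y (Icc t b))
    (hy : ∀ s ∈ Icc t b, y s ≤ E + a * ∫ r in s..b, r⁻¹ * y r) :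
    MonotoneOn (fun s => s ^ a * (E + a * ∫ r in s..b, r⁻¹ * y r)) (Icc t b) := by
  have hpos : ∀ s ∈ Icc t b, 0 < s := fun s hs => ht.trans_le hs.1
  have hgc : ContinuousOn (fun r => r⁻¹ * y r) (Icc t b) :=
    (continuousOn_inv₀.mono fun s hs => (hpos s hs).ne').mul hyc
  have hpow : ContinuousOn (fun s : ℝ => s ^ a) (Icc t b) :=
    continuousOn_id.rpow_const fun s hs => Or.inl (hpos s hs).ne'
  have hint : ContinuousOn (fun s => ∫ r in s..b, r⁻¹ * y r) (Icc t b) := by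
    rcases le_total t b with htb | hbt
    · simpa only [uIcc_of_le htb] using
        continuousOn_primitive_interval_left (μ := volume)
          (hgc.integrableOn_compact isCompact_Icc |>.mono_set (uIcc_of_le htb).subset)
    · exact (subsingleton_Icc_of_ge hbt).continuousOn _
  refine monotoneOn_of_hasDerivWithinAt_nonneg (convex_Icc t b)
    (hpow.mul (continuousOn_const.add (continuousOn_const.mul hint)))
    (f' := fun x => a * x ^ (a - 1) * (E + a * ∫ r in x..b, r⁻¹ * y r)
      + x ^ a * (a * -(x⁻¹ * y x))) ?_ ?_
  · intro x hx
    rw [interior_Icc] at hx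
    have hx0 : 0 < x := ht.trans hx.1
    exact (((Real.hasDerivAt_rpow_const (Or.inl hx0.ne')).mul
      (((hasDerivAt_integral_left_of_continuousOn hgc hx).const_mul a).const_add E)).hasDerivWithinAt)
  · intro x hx
    rw [interior_Icc] at hx
    have hx0 : 0 < x := ht.trans hx.1
    have hxa : x ^ a * x⁻¹ = x ^ (a - 1) := by
      rw [← Real.rpow_neg_one, ← Real.rpow_add hx0, sub_eq_add_neg]
    have hyx := hy x (Ioo_subset_Icc_self hx)
    calc (0 : ℝ) ≤ a * x ^ (a - 1) * (E + a * (∫ r in x..b, r⁻¹ * y r) - y x) :=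
          mul_nonneg (mul_nonneg ha (Real.rpow_nonneg hx0.le _)) (by linarith)
      _ = _ := by rw [← hxa]; ring

theorem le_mul_rpow_neg_of_le_add_integral_inv_mul (ha : 0 ≤ a) (ht : 0 < t) (htb : t ≤ b)
    (hyc : ContinuousOn y (Icc t b))
    (hy : ∀ s ∈ Icc t b, y s ≤ E + a * ∫ r in s..b, r⁻¹ * y r) :
    y t ≤ E * b ^ a * t ^ (-a) := by
  have hmono := monotoneOn_rpow_mul_add_integral_inv_mul ha ht hyc hy
    ⟨le_rfl, htb⟩ ⟨htb, le_rfl⟩ htb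
  simp only [integral_same, mul_zero, add_zero] at hmono
  have hta : t ^ (-a) * t ^ a = 1 := by
    rw [← Real.rpow_add ht, neg_add_cancel, Real.rpow_zero]
  calc y t ≤ E + a * ∫ r in t..b, r⁻¹ * y r := hy t ⟨le_rfl, htb⟩
    _ = t ^ (-a) * (t ^ a * (E + a * ∫ r in t..b, r⁻¹ * y r)) := by
        rw [← mul_assoc, hta, one_mul]
    _ ≤ t ^ (-a) * (b ^ a * E) := mul_le_mul_of_nonneg_left hmono (Real.rpow_nonneg ht.le _)
    _ = E * b ^ a * t ^ (-a) := by ring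

end Gronwall

lemma add_mul_rpow_neg_mul_rpow_neg_le {D B a t : ℝ} (hD : 0 ≤ D) (ha : 0 ≤ a) (ht : 0 < t)
    (ht1 : t ≤ 1) : (D + B * t ^ (-a)) * t ^ (-a) ≤ (D + B) * t ^ (-(2 * a)) := by
  have hsq : t ^ (-(2 * a)) = t ^ (-a) * t ^ (-a) := by
    rw [← Real.rpow_add ht]; ring_nf
  have hone : 1 ≤ t ^ (-a) := Real.one_le_rpow_of_pos_of_le_one_of_nonpos ht ht1 (neg_nonpos.2 ha)
  rw [hsq]
  nlinarith [mul_le_mul_of_nonneg_left hone (mul_nonneg hD (zero_le_one.trans hone))]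

theorem gronwall_with_source_general (y : ℝ → ℝ) (σ c D B : ℝ)
    (hσ : 0 < σ) (hc : 0 ≤ c)
    (hD : 0 ≤ D) (hB : 0 ≤ B)
    (hycont : ContinuousOn y (Set.Ioc 0 1))
    (hineq : ∀ t ∈ Set.Ioc (0 : ℝ) 1,
      y t ≤ D + B * t ^ (-(c * σ)) + c * σ * ∫ s in t..1, s⁻¹ * y s) :
    ∀ t ∈ Set.Ioc (0 : ℝ) 1,
      y t ≤ (D + B * t ^ (-(c * σ))) * t ^ (-(c * σ)) ∧
        y t ≤ (D + B) * t ^ (-(2 * (c * σ))) := by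
  rintro t ⟨ht, ht1⟩
  have ha : 0 ≤ c * σ := mul_nonneg hc hσ.le
  have hsub : Icc t 1 ⊆ Ioc 0 1 := fun s hs => ⟨ht.trans_le hs.1, hs.2⟩
  have hsource : ∀ s ∈ Icc t 1,
      y s ≤ D + B * t ^ (-(c * σ)) + c * σ * ∫ r in s..1, r⁻¹ * y r := fun s hs => by
    have := mul_le_mul_of_nonneg_left (Real.rpow_le_rpow_of_nonpos ht hs.1 (neg_nonpos.2 ha)) hB
    linarith [hineq s (hsub hs)]
  have hfirst := le_mul_rpow_neg_of_le_add_integral_inv_mul ha ht ht1 (hycont.mono hsub) hsource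
  rw [Real.one_rpow, mul_one] at hfirst
  exact ⟨hfirst, hfirst.trans (add_mul_rpow_neg_mul_rpow_neg_le hD ha ht ht1)⟩

/-- Gronwall estimate with inhomogeneous power-law source. -/
theorem gronwall_with_source (y : ℝ → ℝ) (σ c D B : ℝ)
    (hσ : 0 < σ) (hc : 0 ≤ c) (hsmall : c * σ < 2 / 3)
    (hD : 0 ≤ D) (hB : 0 ≤ B)
    (hycont : ContinuousOn y (Set.Ioc 0 1))
    (hynn : ∀ t ∈ Set.Ioc (0 : ℝ) 1, 0 ≤ y t)
    (hineq : ∀ t ∈ Set.Ioc (0 : ℝ) 1,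
      y t ≤ D + B * t ^ (-(c * σ)) + c * σ * ∫ s in t..1, s⁻¹ * y s) :
    ∀ t ∈ Set.Ioc (0 : ℝ) 1,
      y t ≤ (D + B * t ^ (-(c * σ))) * t ^ (-(c * σ)) ∧
        y t ≤ (D + B) * t ^ (-(2 * (c * σ))) :=
  gronwall_with_source_general y σ c D B hσ hc hD hB hycont hineq
end
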